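/- arXiv:2210.11212 — 2 statements merged into one kernel-verified Lean document; each statement's English description precedes it below -/
import Mathlib

section
/- Suppose the digraph of W is strongly connected and all edge weights are nonnegative (W k l ≥ 0 for all k, l). Then for every nominal prescribed-time trajectory X with parameters ρ1, ρ2 > 0 and prescribed time T1 > 0, there exists c ∈ ℝ such that X t k = c for all t ≥ T1 and all nodes k (prescribed-time consensus within the preassigned time T1). -/
open Matrix

/-- Time-varying gain: `μ_T(t) = κ/(T − t)` for `0 ≤ t < T`, `0` otherwise. -/
noncomputable def gain (κ T t : ℝ) : ℝ := if 0 ≤ t ∧ t < T then κ / (T - t) else 0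

/-- Signed Laplacian `L = D − W` with `D k k = ∑_l |W k l|`. -/
noncomputable def sLap {N : ℕ} (W : Matrix (Fin N) (Fin N) ℝ) : Matrix (Fin N) (Fin N) ℝ :=
  Matrix.diagonal (fun k => ∑ l, |W k l|) - W

/-- Node `i` reaches node `j`: reflexive–transitive closure of the edge relation
`E i j ↔ W j i ≠ 0`. -/
def Reaches {N : ℕ} (W : Matrix (Fin N) (Fin N) ℝ) : Fin N → Fin N → Prop :=
  Relation.ReflTransGen (fun i j => W j i ≠ 0)

def StronglyConnected {N : ℕ} (W : Matrix (Fin N) (Fin N) ℝ) : Prop :=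
  ∀ i j, Reaches W i j

def QuasiStronglyConnected {N : ℕ} (W : Matrix (Fin N) (Fin N) ℝ) : Prop :=
  ∃ r, ∀ j, Reaches W r j

def WeaklyConnected {N : ℕ} (W : Matrix (Fin N) (Fin N) ℝ) : Prop :=
  ∀ i j, Relation.ReflTransGen (fun a b => W b a ≠ 0 ∨ W a b ≠ 0) i j

/-- `k` is a leader: every node reaching `k` is reached back by `k`. -/
def IsLeader {N : ℕ} (W : Matrix (Fin N) (Fin N) ℝ) (k : Fin N) : Prop :=
  ∀ j, Reaches W j k → Reaches W k j

/-- Closed strong component of a leader `k`. -/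
def CSC {N : ℕ} (W : Matrix (Fin N) (Fin N) ℝ) (k : Fin N) : Set (Fin N) :=
  {j | Reaches W j k ∧ Reaches W k j}

/-- A gauge for a node set `S`. -/
def IsGauge {N : ℕ} (W : Matrix (Fin N) (Fin N) ℝ) (S : Set (Fin N)) (g : Fin N → ℝ) : Prop :=
  (∀ k ∈ S, g k = 1 ∨ g k = -1) ∧ ∀ k ∈ S, ∀ l ∈ S, g k * W k l * g l = |W k l|

/-- Nominal prescribed-time trajectory of the protocol (4). -/
def NominalTraj {N : ℕ} (W : Matrix (Fin N) (Fin N) ℝ) (κ ρ1 ρ2 T1 : ℝ)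
    (X : ℝ → Fin N → ℝ) : Prop :=
  Continuous X ∧
  ∀ t : ℝ, 0 ≤ t → t ≠ T1 →
    HasDerivAt X ((-(ρ1 + ρ2 * gain κ T1 t)) • (sLap W).mulVec (X t)) t

/-!
Strong connectivity and nonnegativity give a left null vector `w > 0` of the Laplacian `L`.
Hence the weighted mean `m = w ⬝ᵥ x / ∑ w` is conserved, and `V = ∑ w k (x k - m)²` satisfies
`V' = -a(t) q(x - m)` with `q y = ∑ w k W k l (y k - y l)²` and `a(t) = ρ1 + ρ2 μ(t)`.
On the hyperplane `w ⬝ᵥ y = 0` the form `q` vanishes only at `0`, so by compactness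
`q ≥ λ V` for some `λ > 0`. Then `V' ≤ -(λ ρ2 κ / (T1 - t)) V` forces
`V ≤ V(0) ((T1 - t) / T1) ^ (λ ρ2 κ) → 0` as `t → T1`, and after `T1` the function `V ≥ 0`
no longer increases.
-/

theorem exists_pos_mul_norm_sq_le {E : Type*} [NormedAddCommGroup E] [NormedSpace ℝ E]
    [ProperSpace E] {s : Set E} (hs : IsClosed s) (hsmul : ∀ (c : ℝ), ∀ y ∈ s, c • y ∈ s)
    {q : E → ℝ} (hq : Continuous q) (hhom : ∀ (c : ℝ) (y : E), q (c • y) = c ^ 2 * q y)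
    (hpos : ∀ y ∈ s, y ≠ 0 → 0 < q y) : ∃ lam > 0, ∀ y ∈ s, lam * ‖y‖ ^ 2 ≤ q y := by
  have hq0 : q 0 = 0 := by simpa using hhom 0 0
  have hnormalize : ∀ y ∈ s, y ≠ 0 → ‖y‖⁻¹ • y ∈ s ∩ Metric.sphere 0 1 := fun y hy hy0 =>
    ⟨hsmul _ y hy, by simpa using norm_smul_inv_norm (𝕜 := ℝ) hy0⟩
  rcases (s ∩ Metric.sphere (0 : E) 1).eq_empty_or_nonempty with hK | hK
  · refine ⟨1, one_pos, fun y hy => ?_⟩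
    obtain rfl : y = 0 := by
      by_contra hy0
      simpa [hK] using hnormalize y hy hy0
    simp [hq0]
  obtain ⟨u, hu, hmin⟩ :=
    ((isCompact_sphere (0 : E) 1).inter_left hs).exists_isMinOn hK hq.continuousOn
  refine ⟨q u, hpos u hu.1 (ne_zero_of_mem_unit_sphere ⟨u, hu.2⟩), fun y hy => ?_⟩
  rcases eq_or_ne y 0 with rfl | hy0
  · simp [hq0]
  have h : q u ≤ q (‖y‖⁻¹ • y) := hmin (hnormalize y hy hy0)
  rwa [hhom, inv_pow, inv_mul_eq_div, le_div_iff₀ (by positivity)] at h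

theorem le_zero_of_hasDerivAt_le_neg_div_mul {f f' : ℝ → ℝ} {T p : ℝ} (hT : 0 < T) (hp : 0 < p)
    (hf : ContinuousOn f (Set.Icc 0 T)) (hf' : ∀ t ∈ Set.Ioo 0 T, HasDerivAt f (f' t) t)
    (hle : ∀ t ∈ Set.Ioo 0 T, f' t ≤ -(p / (T - t)) * f t) : f T ≤ 0 := by
  -- `f t * (T - t) ^ (-p)` is antitone, so `f t ≤ f 0 * T ^ (-p) * (T - t) ^ p → 0` as `t → T`.
  have hG : AntitoneOn (fun t => f t * (T - t) ^ (-p)) (Set.Ico 0 T) := by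
    refine antitoneOn_of_hasDerivWithinAt_nonpos (convex_Ico 0 T)
      (f' := fun t => (T - t) ^ (-p) * (f' t + p / (T - t) * f t)) ?_ (fun t ht => ?_)
      (fun t ht => ?_)
    · exact (hf.mono Set.Ico_subset_Icc_self).mul <|
        (continuousOn_const.sub continuousOn_id).rpow_const fun t ht => Or.inl (sub_pos.2 ht.2).ne'
    all_goals rw [interior_Ico] at ht
    · have hTt : T - t ≠ 0 := (sub_pos.2 ht.2).ne'
      refine ((hf' t ht).mul (((hasDerivAt_id t).const_sub T).rpow_const
        (Or.inl hTt))).hasDerivWithinAt.congr_deriv ?_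
      rw [id, Real.rpow_sub_one hTt]
      field_simp
    · exact mul_nonpos_of_nonneg_of_nonpos (Real.rpow_pos_of_pos (sub_pos.2 ht.2) _).le
        (by linarith [hle t ht])
  have hbound : ∀ t ∈ Set.Ico 0 T, f t ≤ f 0 * T ^ (-p) * (T - t) ^ p := fun t ht => by
    have h : f t * (T - t) ^ (-p) ≤ f 0 * (T - 0) ^ (-p) := hG ⟨le_rfl, hT⟩ ht ht.1
    rwa [sub_zero, Real.rpow_neg (sub_pos.2 ht.2).le, ← div_eq_mul_inv,
      div_le_iff₀ (Real.rpow_pos_of_pos (sub_pos.2 ht.2) p)] at h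
  have hcont : Continuous fun t => f 0 * T ^ (-p) * (T - t) ^ p :=
    continuous_const.mul ((continuous_const.sub continuous_id).rpow_const fun _ => Or.inr hp.le)
  calc f T ≤ f 0 * T ^ (-p) * (T - T) ^ p :=
        ContinuousWithinAt.closure_le (by rw [closure_Ico hT.ne]; exact ⟨hT.le, le_rfl⟩)
          ((hf T ⟨hT.le, le_rfl⟩).mono Set.Ico_subset_Icc_self) hcont.continuousWithinAt hbound
    _ = 0 := by rw [sub_self, Real.zero_rpow hp.ne', mul_zero]

theorem eq_zero_of_hasDerivAt_le_neg_div_mul {f f' : ℝ → ℝ} {T p : ℝ} (hT : 0 < T) (hp : 0 < p)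
    (hf : Continuous f) (hf0 : ∀ t, 0 ≤ f t) (hf' : ∀ t, 0 < t → t ≠ T → HasDerivAt f (f' t) t)
    (hle : ∀ t ∈ Set.Ioo 0 T, f' t ≤ -(p / (T - t)) * f t) (hle' : ∀ t, T < t → f' t ≤ 0)
    {t : ℝ} (ht : T ≤ t) : f t = 0 := by
  have hfT : f T ≤ 0 := le_zero_of_hasDerivAt_le_neg_div_mul hT hp hf.continuousOn
    (fun s hs => hf' s hs.1 hs.2.ne) hle
  have hanti : AntitoneOn f (Set.Ici T) := by
    refine antitoneOn_of_hasDerivWithinAt_nonpos (convex_Ici T) hf.continuousOn (f' := f')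
      (fun s hs => ?_) fun s hs => ?_
    all_goals rw [interior_Ici] at hs
    · exact (hf' s (hT.trans hs) hs.ne').hasDerivWithinAt
    · exact hle' s hs
  exact le_antisymm ((hanti Set.self_mem_Ici ht ht).trans hfT) (hf0 t)

section

variable {ι : Type*} [Fintype ι] {X : ℝ → ι → ℝ}

theorem HasDerivAt.const_dotProduct {X' : ι → ℝ} {t : ℝ} (w : ι → ℝ) (hX : HasDerivAt X X' t) :
    HasDerivAt (fun s => w ⬝ᵥ X s) (w ⬝ᵥ X') t :=
  HasDerivAt.fun_sum fun k _ => (hasDerivAt_pi.1 hX k).const_mul (w k)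

theorem dotProduct_eq_of_vecMul_eq_zero {A : Matrix ι ι ℝ} {w : ι → ℝ} (hwA : w ᵥ* A = 0)
    {a : ℝ → ℝ} {T : ℝ} (hX : Continuous X)
    (hX' : ∀ s ∈ Set.Ico 0 T, HasDerivAt X (a s • A *ᵥ X s) s) {t : ℝ} (ht : t ∈ Set.Ico 0 T) :
    w ⬝ᵥ X t = w ⬝ᵥ X 0 := by
  refine constant_of_has_deriv_right_zero (continuous_const.dotProduct hX).continuousOn
    (fun s hs => ?_) t ⟨ht.1, le_rfl⟩
  have h := (hX' s ⟨hs.1, hs.2.trans ht.2⟩).const_dotProduct w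
  rw [dotProduct_smul, dotProduct_mulVec, hwA, zero_dotProduct, smul_zero] at h
  exact h.hasDerivWithinAt

theorem dotProduct_sub_const_div_sum {w : ι → ℝ} (hw : ∑ i, w i ≠ 0) (x : ι → ℝ) :
    w ⬝ᵥ (x - fun _ => w ⬝ᵥ x / ∑ i, w i) = 0 := by
  rw [dotProduct_sub, sub_eq_zero]
  simp only [dotProduct, ← Finset.sum_mul]
  rw [mul_div_cancel₀ _ hw]

theorem sum_mul_sq_nonneg {w : ι → ℝ} (hw : ∀ i, 0 < w i) (y : ι → ℝ) :
    0 ≤ ∑ i, w i * y i ^ 2 :=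
  Finset.sum_nonneg fun i _ => mul_nonneg (hw i).le (sq_nonneg _)

theorem eq_zero_of_sum_mul_sq_eq_zero {w y : ι → ℝ} (hw : ∀ i, 0 < w i)
    (h : ∑ i, w i * y i ^ 2 = 0) (i : ι) : y i = 0 := by
  have := (Finset.sum_eq_zero_iff_of_nonneg fun j _ => mul_nonneg (hw j).le (sq_nonneg (y j))).mp
    h i (Finset.mem_univ i)
  simpa [(hw i).ne'] using this

end

def dirichletEnergy {N : ℕ} (W : Matrix (Fin N) (Fin N) ℝ) (w y : Fin N → ℝ) : ℝ :=
  ∑ k, ∑ l, w k * W k l * (y k - y l) ^ 2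

section Laplacian

variable {N : ℕ} {W : Matrix (Fin N) (Fin N) ℝ}

theorem StronglyConnected.forall_of_edge_closed (hSC : StronglyConnected W) {P : Fin N → Prop}
    (hP : ∀ i j, W j i ≠ 0 → P i → P j) {i : Fin N} (hi : P i) (j : Fin N) : P j := by
  induction hSC i j with
  | refl => exact hi
  | tail _ hedge ih => exact hP _ _ hedge ih

variable (hpos : ∀ k l, 0 ≤ W k l)
include hpos

theorem sLap_mulVec_of_nonneg (y : Fin N → ℝ) (k : Fin N) :
    (sLap W *ᵥ y) k = ∑ l, W k l * (y k - y l) := by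
  rw [sLap, sub_mulVec, Pi.sub_apply, mulVec_diagonal]
  simp [abs_of_nonneg (hpos _ _), mulVec, dotProduct, mul_sub, Finset.sum_mul]

theorem vecMul_sLap_of_nonneg (v : Fin N → ℝ) (l : Fin N) :
    (v ᵥ* sLap W) l = v l * ∑ k, W l k - ∑ k, v k * W k l := by
  rw [sLap, vecMul_sub, Pi.sub_apply, vecMul_diagonal]
  simp [abs_of_nonneg (hpos _ _), vecMul, dotProduct, mul_comm]

theorem sLap_mulVec_sub_const (y : Fin N → ℝ) (c : ℝ) :
    sLap W *ᵥ (y - fun _ => c) = sLap W *ᵥ y := by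
  ext k
  simp only [sLap_mulVec_of_nonneg hpos, Pi.sub_apply, sub_sub_sub_cancel_right]

theorem exists_pos_vecMul_sLap_eq_zero [NeZero N] (hSC : StronglyConnected W) :
    ∃ w : Fin N → ℝ, (∀ k, 0 < w k) ∧ w ᵥ* sLap W = 0 := by
  obtain ⟨v, hv0, hv⟩ : ∃ v, v ≠ 0 ∧ v ᵥ* sLap W = 0 := by
    refine exists_vecMul_eq_zero_iff.mpr (exists_mulVec_eq_zero_iff.mp ⟨1, one_ne_zero, ?_⟩)
    ext k
    simp [sLap_mulVec_of_nonneg hpos]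
  have hbal : ∀ l, v l * ∑ k, W l k = ∑ k, v k * W k l := fun l => by
    simpa [vecMul_sLap_of_nonneg hpos, sub_eq_zero] using congrFun hv l
  -- Each entry of `|v| ᵥ* L` is `≤ 0` and they sum to `0`, so `|v|` is again a left null vector.
  have hle : ∀ l ∈ Finset.univ, |v l| * ∑ k, W l k ≤ ∑ k, |v k| * W k l := fun l _ => by
    calc |v l| * ∑ k, W l k = |∑ k, v k * W k l| := by
          rw [← hbal, abs_mul, abs_of_nonneg (Finset.sum_nonneg fun k _ => hpos l k)]
      _ ≤ ∑ k, |v k| * W k l := by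
          simpa only [abs_mul, abs_of_nonneg (hpos _ _)] using
            Finset.abs_sum_le_sum_abs (fun k => v k * W k l) Finset.univ
  have hsum : ∑ l, |v l| * ∑ k, W l k = ∑ l, ∑ k, |v k| * W k l := by
    rw [Finset.sum_comm]
    simp only [Finset.mul_sum]
  have habs : ∀ l, |v l| * ∑ k, W l k = ∑ k, |v k| * W k l := fun l =>
    (Finset.sum_eq_sum_iff_of_le hle).mp hsum l (Finset.mem_univ l)
  have hzero : ∀ i j, W j i ≠ 0 → |v i| = 0 → |v j| = 0 := fun i j hji hi => by
    have h := habs i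
    rw [hi, zero_mul, eq_comm, Finset.sum_eq_zero_iff_of_nonneg
      fun k _ => mul_nonneg (abs_nonneg _) (hpos k i)] at h
    exact (mul_eq_zero.mp (h j (Finset.mem_univ j))).resolve_right hji
  refine ⟨fun k => |v k|, fun k => (abs_nonneg _).lt_of_ne' fun hk => hv0 ?_, ?_⟩
  · ext j
    exact abs_eq_zero.mp (hSC.forall_of_edge_closed hzero hk j)
  · ext l
    simp [vecMul_sLap_of_nonneg hpos, habs]

theorem dirichletEnergy_nonneg {w : Fin N → ℝ} (hw : ∀ k, 0 < w k) (y : Fin N → ℝ) :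
    0 ≤ dirichletEnergy W w y :=
  Finset.sum_nonneg fun k _ => Finset.sum_nonneg fun l _ =>
    mul_nonneg (mul_nonneg (hw k).le (hpos k l)) (sq_nonneg _)

theorem dirichletEnergy_eq {w : Fin N → ℝ} (hwL : w ᵥ* sLap W = 0) (y : Fin N → ℝ) :
    dirichletEnergy W w y = 2 * ∑ k, w k * y k * (sLap W *ᵥ y) k := by
  -- `(y k - y l)² = 2 y k (y k - y l) - (y k² - y l²)`; the last part sums to `w ⬝ᵥ L y² = 0`.
  have hsq : w ⬝ᵥ (sLap W *ᵥ fun k => y k ^ 2) = 0 := by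
    rw [dotProduct_mulVec, hwL, zero_dotProduct]
  have hterm : ∀ k, ∑ l, w k * W k l * (y k - y l) ^ 2 =
      2 * (w k * y k * (sLap W *ᵥ y) k) - w k * (sLap W *ᵥ fun k => y k ^ 2) k := fun k => by
    simp only [sLap_mulVec_of_nonneg hpos, Finset.mul_sum, ← Finset.sum_sub_distrib]
    exact Finset.sum_congr rfl fun l _ => by ring
  rw [dotProduct] at hsq
  rw [dirichletEnergy, Finset.sum_congr rfl fun k _ => hterm k, Finset.sum_sub_distrib,
    ← Finset.mul_sum, hsq, sub_zero]

theorem dirichletEnergy_pos (hSC : StronglyConnected W) {w : Fin N → ℝ} (hw : ∀ k, 0 < w k)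
    {y : Fin N → ℝ} (hy : w ⬝ᵥ y = 0) (hy0 : y ≠ 0) : 0 < dirichletEnergy W w y := by
  refine (dirichletEnergy_nonneg hpos hw y).lt_of_ne fun hq => hy0 ?_
  have hedge : ∀ i j, W j i ≠ 0 → y j = y i := fun i j hji => by
    have hterm := (Finset.sum_eq_zero_iff_of_nonneg fun k _ => Finset.sum_nonneg fun l _ =>
      mul_nonneg (mul_nonneg (hw k).le (hpos k l)) (sq_nonneg _)).mp hq.symm j (Finset.mem_univ j)
    have := (Finset.sum_eq_zero_iff_of_nonneg fun l _ =>
      mul_nonneg (mul_nonneg (hw j).le (hpos j l)) (sq_nonneg _)).mp hterm i (Finset.mem_univ i)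
    simpa [(hw j).ne', hji, sub_eq_zero] using this
  ext i
  have hconst : ∀ j, y j = y i :=
    hSC.forall_of_edge_closed (P := fun j => y j = y i)
      (fun a b hba ha => (hedge a b hba).trans ha) rfl
  have hmean : (∑ k, w k) * y i = 0 := by
    rw [← hy, dotProduct, Finset.sum_mul]
    exact Finset.sum_congr rfl fun k _ => by rw [hconst k]
  exact (mul_eq_zero.mp hmean).resolve_left
    (Finset.sum_pos (fun k _ => hw k) ⟨i, Finset.mem_univ i⟩).ne'

theorem exists_pos_mul_le_dirichletEnergy [NeZero N] (hSC : StronglyConnected W)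
    {w : Fin N → ℝ} (hw : ∀ k, 0 < w k) :
    ∃ lam > 0, ∀ y, w ⬝ᵥ y = 0 → lam * ∑ k, w k * y k ^ 2 ≤ dirichletEnergy W w y := by
  obtain ⟨lam, hlam, hgap⟩ := exists_pos_mul_norm_sq_le (s := {y | w ⬝ᵥ y = 0})
    (isClosed_eq (continuous_const.dotProduct continuous_id) continuous_const)
    (fun c y hy => by simp_all [dotProduct_smul])
    (by unfold dirichletEnergy; fun_prop)
    (fun c y => by simp only [dirichletEnergy, Finset.mul_sum]; congr! 2; simp; ring)
    (fun y hy hy0 => dirichletEnergy_pos hpos hSC hw hy hy0)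
  have hwsum : 0 < ∑ k, w k := Finset.sum_pos (fun k _ => hw k) Finset.univ_nonempty
  refine ⟨lam / ∑ k, w k, by positivity, fun y hy => ?_⟩
  have hnorm : ∑ k, w k * y k ^ 2 ≤ (∑ k, w k) * ‖y‖ ^ 2 := by
    rw [Finset.sum_mul]
    refine Finset.sum_le_sum fun k _ => mul_le_mul_of_nonneg_left ?_ (hw k).le
    simpa [Real.norm_eq_abs, sq_abs] using
      pow_le_pow_left₀ (norm_nonneg _) (norm_le_pi_norm y k) 2
  calc lam / (∑ k, w k) * ∑ k, w k * y k ^ 2 ≤ lam / (∑ k, w k) * ((∑ k, w k) * ‖y‖ ^ 2) := by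
        gcongr
    _ = lam * ‖y‖ ^ 2 := by field_simp
    _ ≤ dirichletEnergy W w y := hgap y hy

theorem hasDerivAt_sum_mul_sub_sq {w : Fin N → ℝ} (hwL : w ᵥ* sLap W = 0)
    {X : ℝ → Fin N → ℝ} {a t : ℝ}
    (hX : HasDerivAt X (a • sLap W *ᵥ X t) t) (m : ℝ) :
    HasDerivAt (fun s => ∑ k, w k * (X s k - m) ^ 2)
      (a * dirichletEnergy W w (X t - fun _ => m)) t := by
  refine (HasDerivAt.fun_sum fun k _ =>
    (((hasDerivAt_pi.1 hX k).sub_const m).pow 2).const_mul (w k)).congr_deriv ?_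
  rw [dirichletEnergy_eq hpos hwL, sLap_mulVec_sub_const hpos, Finset.mul_sum, Finset.mul_sum]
  refine Finset.sum_congr rfl fun k _ => ?_
  simp only [Pi.sub_apply, Pi.smul_apply, smul_eq_mul]
  ring

end Laplacian

theorem gain_nonneg {κ : ℝ} (hκ : 0 ≤ κ) (T t : ℝ) : 0 ≤ gain κ T t := by
  unfold gain
  split_ifs with h
  · exact div_nonneg hκ (sub_pos.2 h.2).le
  · exact le_rfl

theorem neg_gain_mul_le {κ ρ1 ρ2 T t lam q v : ℝ} (hρ1 : 0 ≤ ρ1) (hρ2 : 0 ≤ ρ2) (hκ : 0 ≤ κ)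
    (ht : t ∈ Set.Ioo 0 T) (hq : lam * v ≤ q) (hq0 : 0 ≤ q) :
    -(ρ1 + ρ2 * gain κ T t) * q ≤ -(lam * ρ2 * κ / (T - t)) * v := by
  have hc : 0 ≤ ρ2 * κ / (T - t) := div_nonneg (mul_nonneg hρ2 hκ) (sub_pos.2 ht.2).le
  rw [gain, if_pos ⟨ht.1.le, ht.2⟩]
  calc -(ρ1 + ρ2 * (κ / (T - t))) * q ≤ -(ρ2 * κ / (T - t) * q) := by
        linear_combination mul_nonneg hρ1 hq0
    _ ≤ -(ρ2 * κ / (T - t) * (lam * v)) := neg_le_neg (mul_le_mul_of_nonneg_left hq hc)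
    _ = -(lam * ρ2 * κ / (T - t)) * v := by ring

theorem prescribed_time_consensus_strong_nonneg_general
    {N : ℕ} (hN : 2 ≤ N) (W : Matrix (Fin N) (Fin N) ℝ)
    (hSC : StronglyConnected W)
    (hpos : ∀ k l, 0 ≤ W k l)
    (κ ρ1 ρ2 T1 : ℝ) (hκ : 2 < κ) (hρ1 : 0 < ρ1) (hρ2 : 0 < ρ2) (hT1 : 0 < T1)
    (X : ℝ → Fin N → ℝ) (hX : NominalTraj W κ ρ1 ρ2 T1 X) :
    ∃ c : ℝ, ∀ t : ℝ, T1 ≤ t → ∀ k, X t k = c := by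
  obtain ⟨hXc, hXd⟩ := hX
  have : NeZero N := ⟨by omega⟩
  obtain ⟨w, hw, hwL⟩ := exists_pos_vecMul_sLap_eq_zero hpos hSC
  obtain ⟨lam, hlam, hgap⟩ := exists_pos_mul_le_dirichletEnergy hpos hSC hw
  have hwsum : ∑ k, w k ≠ 0 := (Finset.sum_pos (fun k _ => hw k) Finset.univ_nonempty).ne'
  set m := w ⬝ᵥ X 0 / ∑ k, w k
  set V := fun t => ∑ k, w k * (X t k - m) ^ 2
  have hV' : ∀ t, 0 ≤ t → t ≠ T1 → HasDerivAt V
      (-(ρ1 + ρ2 * gain κ T1 t) * dirichletEnergy W w (X t - fun _ => m)) t :=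
    fun t ht htT => hasDerivAt_sum_mul_sub_sq hpos hwL (hXd t ht htT) m
  have hmean : ∀ t ∈ Set.Ico 0 T1, w ⬝ᵥ (X t - fun _ => m) = 0 := fun t ht => by
    have h := dotProduct_sub_const_div_sum hwsum (X t)
    rwa [dotProduct_eq_of_vecMul_eq_zero hwL hXc (fun s hs => hXd s hs.1 hs.2.ne) ht] at h
  refine ⟨m, fun t ht k => ?_⟩
  have hVt : V t = 0 := by
    refine eq_zero_of_hasDerivAt_le_neg_div_mul hT1 (p := lam * ρ2 * κ) (by positivity)
      (by fun_prop) (fun s => sum_mul_sq_nonneg hw _) (fun s hs hsT => hV' s hs.le hsT)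
      (fun s hs => ?_) (fun s hs => ?_) ht
    · exact neg_gain_mul_le hρ1.le hρ2.le (by linarith) hs (hgap _ (hmean s ⟨hs.1.le, hs.2⟩))
        (dirichletEnergy_nonneg hpos hw _)
    · have := gain_nonneg (κ := κ) (by linarith) T1 s
      exact mul_nonpos_of_nonpos_of_nonneg (by nlinarith) (dirichletEnergy_nonneg hpos hw _)
  exact sub_eq_zero.mp (eq_zero_of_sum_mul_sq_eq_zero hw hVt k)

theorem prescribed_time_consensus_strong_nonneg
    {N : ℕ} (hN : 2 ≤ N) (W : Matrix (Fin N) (Fin N) ℝ)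
    (hdiag : ∀ k, W k k = 0)
    (hSC : StronglyConnected W)
    (hpos : ∀ k l, 0 ≤ W k l)
    (κ ρ1 ρ2 T1 : ℝ) (hκ : 2 < κ) (hρ1 : 0 < ρ1) (hρ2 : 0 < ρ2) (hT1 : 0 < T1)
    (X : ℝ → Fin N → ℝ) (hX : NominalTraj W κ ρ1 ρ2 T1 X) :
    ∃ c : ℝ, ∀ t : ℝ, T1 ≤ t → ∀ k, X t k = c :=
  prescribed_time_consensus_strong_nonneg_general hN W hSC hpos κ ρ1 ρ2 T1 hκ hρ1 hρ2 hT1 X hX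
end

section
/- Suppose the digraph of W is quasi-strongly connected and structurally balanced with gauge g for the full node set. Then for every nominal prescribed-time trajectory X with parameters ρ1, ρ2 > 0 and prescribed time T1 > 0, there exists c ∈ ℝ such that X t k = g k · c for all nodes k and all t ≥ T1 (prescribed-time bipartite consensus within the preassigned time T1). -/
open Matrix

/-!
Multiplying by the gauge, `y = g * X` solves `y' = -(ρ₁ + ρ₂ μ_{T₁}(t)) L̄ y`, where `L̄` is the
Laplacian of `|W|`. Before `T₁` this makes `y t = exp (-(s t - s 0) L̄) y 0` for a primitive `s` of
the gain, and `s t → ∞` as `t → T₁⁻`. Since `-L̄` is a Metzler matrix with zero row sums,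
`exp (-L̄)` is row stochastic, and its column at a root of the quasi-strongly connected graph is
positive; so each unit of rescaled time shrinks the oscillation `max y - min y` by a fixed factor,
and `y T₁` is a consensus, i.e. `X T₁ = g c`. This vector lies in the kernel of `L`, and after `T₁`
the protocol is `X' = -ρ₁ L X`, so `X` stays at `g c`.
-/

open Filter Topology NormedSpace

attribute [local instance] Matrix.linftyOpNormedAddCommGroup Matrix.linftyOpNormedRing
  Matrix.linftyOpNormedAlgebra

section MatrixExp

variable {n : Type*} [Fintype n] [DecidableEq n]

theorem hasDerivAt_exp_smul_mulVec (A : Matrix n n ℝ) (x : n → ℝ) {S : ℝ → ℝ} {a t : ℝ}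
    (hS : HasDerivAt S a t) :
    HasDerivAt (fun t => exp (S t • A) *ᵥ x) (a • (A *ᵥ (exp (S t • A) *ᵥ x))) t := by
  have hexp := (hasDerivAt_exp_smul_const' A (S t)).scomp t hS
  have hmv := (LinearMap.toContinuousLinearMap
    ((toLin' : Matrix n n ℝ ≃ₗ[ℝ] _).toLinearMap.flip x)).hasFDerivAt.comp_hasDerivAt t hexp
  refine hmv.congr_deriv ?_
  change (a • (A * exp (S t • A))) *ᵥ x = _
  rw [smul_mulVec, mulVec_mulVec]

theorem exp_mulVec_of_mulVec_eq_zero {A : Matrix n n ℝ} {x : n → ℝ} (h : A *ᵥ x = 0) :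
    exp A *ᵥ x = x := by
  have hderiv (t : ℝ) : HasDerivAt (fun t => exp (t • A) *ᵥ x) 0 t := by
    have hd := hasDerivAt_exp_smul_mulVec A x (hasDerivAt_id t)
    rwa [id, mulVec_mulVec, ((Commute.refl A).smul_right t).exp_right.eq, ← mulVec_mulVec, h,
      mulVec_zero, smul_zero] at hd
  simpa using is_const_of_deriv_eq_zero (fun t => (hderiv t).differentiableAt)
    (fun t => (hderiv t).deriv) 1 0

theorem exp_eq_smul_exp_add_smul_one (A : Matrix n n ℝ) (d : ℝ) :
    exp A = Real.exp (-d) • exp (A + d • (1 : Matrix n n ℝ)) := by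
  have hscalar : exp (algebraMap ℝ (Matrix n n ℝ) d) = algebraMap ℝ _ (Real.exp d) := by
    rw [Real.exp_eq_exp_ℝ]; exact (algebraMap_exp_comm d).symm
  rw [Matrix.exp_add_of_commute _ _ ((Commute.one_right A).smul_right d),
    ← Algebra.algebraMap_eq_smul_one, hscalar, Algebra.algebraMap_eq_smul_one, mul_smul_one,
    smul_smul, ← Real.exp_add, neg_add_cancel, Real.exp_zero, one_smul]

theorem hasSum_exp_apply (A : Matrix n n ℝ) (i j : n) :
    HasSum (fun k : ℕ => (k.factorial⁻¹ : ℝ) * (A ^ k) i j) (exp A i j) :=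
  Pi.hasSum.1 (Pi.hasSum.1 (exp_series_hasSum_exp' (𝕂 := ℝ) A) i) j

theorem exp_apply_nonneg_of_nonneg {A : Matrix n n ℝ} (hA : ∀ i j, 0 ≤ A i j) (i j : n) :
    0 ≤ exp A i j :=
  (hasSum_exp_apply A i j).nonneg fun k => mul_nonneg (by positivity) (pow_apply_nonneg hA k i j)

theorem exp_apply_pos_of_pow_apply_pos {A : Matrix n n ℝ} (hA : ∀ i j, 0 ≤ A i j) {i j : n}
    {k : ℕ} (hk : 0 < (A ^ k) i j) : 0 < exp A i j :=
  lt_of_lt_of_le (by positivity) <| le_hasSum (hasSum_exp_apply A i j) k fun m _ =>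
    mul_nonneg (by positivity) (pow_apply_nonneg hA m i j)

theorem exists_pow_apply_pos_of_reflTransGen {A : Matrix n n ℝ} (hA : ∀ i j, 0 ≤ A i j)
    {i j : n} (h : Relation.ReflTransGen (fun a b => 0 < A a b) i j) :
    ∃ k : ℕ, 0 < (A ^ k) i j := by
  induction h with
  | refl => exact ⟨0, by simp⟩
  | @tail b c _ hbc ih =>
    obtain ⟨k, hk⟩ := ih
    refine ⟨k + 1, ?_⟩
    rw [pow_succ, mul_apply]
    exact Finset.sum_pos' (fun l _ => mul_nonneg (pow_apply_nonneg hA k i l) (hA l c))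
      ⟨b, Finset.mem_univ b, mul_pos hk hbc⟩

end MatrixExp

section Stochastic

variable {n : Type*} [Fintype n] [DecidableEq n] {P : Matrix n n ℝ}

theorem mul_sub_le_sub_mulVec_of_mem_rowStochastic (hP : P ∈ rowStochastic ℝ n) {z : n → ℝ}
    {c : ℝ} (hc : ∀ l, z l ≤ c) (i r : n) : P i r * (c - z r) ≤ c - (P *ᵥ z) i := by
  have hsum : c - (P *ᵥ z) i = ∑ l, P i l * (c - z l) := by
    simp only [mul_sub, Finset.sum_sub_distrib, ← Finset.sum_mul, sum_row_of_mem_rowStochastic hP,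
      one_mul, mulVec, dotProduct]
  rw [hsum]
  exact Finset.single_le_sum (f := fun l => P i l * (c - z l))
    (fun l _ => mul_nonneg (nonneg_of_mem_rowStochastic hP) (sub_nonneg.2 (hc l)))
    (Finset.mem_univ r)

theorem mulVec_sub_mulVec_le_of_mem_rowStochastic (hP : P ∈ rowStochastic ℝ n) {r : n} {ε : ℝ}
    (hε : ∀ i, ε ≤ P i r) {z : n → ℝ} {D : ℝ} (hD : ∀ i j, z i - z j ≤ D) (i j : n) :
    (P *ᵥ z) i - (P *ᵥ z) j ≤ (1 - ε) * D := by
  have : Nonempty n := ⟨i⟩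
  obtain ⟨p, hp⟩ := Finite.exists_max z
  obtain ⟨q, hq⟩ := Finite.exists_min z
  have hupper := mul_sub_le_sub_mulVec_of_mem_rowStochastic hP hp i r
  have hlower := mul_sub_le_sub_mulVec_of_mem_rowStochastic hP (z := -z) (c := -z q)
    (fun l => neg_le_neg (hq l)) j r
  rw [mulVec_neg] at hlower
  simp only [Pi.neg_apply, sub_neg_eq_add] at hlower
  have hε1 : 0 ≤ 1 - ε := sub_nonneg.2 ((hε i).trans (le_one_of_mem_rowStochastic hP))
  have hi : ε * (z p - z r) ≤ P i r * (z p - z r) :=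
    mul_le_mul_of_nonneg_right (hε i) (by linarith [hp r])
  have hj : ε * (z r - z q) ≤ P j r * (z r - z q) :=
    mul_le_mul_of_nonneg_right (hε j) (by linarith [hq r])
  calc (P *ᵥ z) i - (P *ᵥ z) j ≤ (1 - ε) * (z p - z q) := by linarith
    _ ≤ (1 - ε) * D := mul_le_mul_of_nonneg_left (hD p q) hε1

end Stochastic

section Metzler

variable {n : Type*}

def IsMetzler (M : Matrix n n ℝ) : Prop := ∀ i j, i ≠ j → 0 ≤ M i j

namespace IsMetzler

variable {M : Matrix n n ℝ}

theorem smul (hM : IsMetzler M) {s : ℝ} (hs : 0 ≤ s) : IsMetzler (s • M) :=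
  fun i j hij => mul_nonneg hs (hM i j hij)

variable [Fintype n] [DecidableEq n]

theorem add_smul_one_nonneg (hM : IsMetzler M) (i j : n) :
    0 ≤ (M + (∑ k, |M k k|) • (1 : Matrix n n ℝ)) i j := by
  rcases eq_or_ne i j with rfl | hij
  · have hdiag : |M i i| ≤ ∑ k, |M k k| :=
      Finset.single_le_sum (f := fun k => |M k k|) (fun k _ => abs_nonneg _) (Finset.mem_univ i)
    simp only [Matrix.add_apply, Matrix.smul_apply, one_apply_eq, smul_eq_mul, mul_one]
    linarith [neg_abs_le (M i i)]
  · simpa [one_apply_ne hij] using hM i j hij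

theorem exp_apply_nonneg (hM : IsMetzler M) (i j : n) : 0 ≤ exp M i j := by
  rw [exp_eq_smul_exp_add_smul_one M (∑ k, |M k k|)]
  exact mul_nonneg (Real.exp_nonneg _) (exp_apply_nonneg_of_nonneg hM.add_smul_one_nonneg i j)

theorem exp_apply_pos (hM : IsMetzler M) {i j : n}
    (h : Relation.ReflTransGen (fun a b => 0 < M a b) i j) : 0 < exp M i j := by
  set d := ∑ k, |M k k|
  have hd : 0 ≤ d := Finset.sum_nonneg fun k _ => abs_nonneg _
  have hle (a b : n) : M a b ≤ (M + d • (1 : Matrix n n ℝ)) a b := by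
    by_cases hab : a = b <;> simp [one_apply, hab, hd]
  have hpath : Relation.ReflTransGen (fun a b => 0 < (M + d • (1 : Matrix n n ℝ)) a b) i j :=
    Relation.ReflTransGen.mono (fun a b hab => lt_of_lt_of_le hab (hle a b)) i j h
  obtain ⟨k, hk⟩ := exists_pow_apply_pos_of_reflTransGen hM.add_smul_one_nonneg hpath
  rw [exp_eq_smul_exp_add_smul_one M d]
  exact mul_pos (Real.exp_pos _) (exp_apply_pos_of_pow_apply_pos hM.add_smul_one_nonneg hk)

theorem exp_mem_rowStochastic (hM : IsMetzler M) (h1 : M *ᵥ 1 = 0) :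
    exp M ∈ rowStochastic ℝ n :=
  ⟨hM.exp_apply_nonneg, exp_mulVec_of_mulVec_eq_zero h1⟩

theorem exp_smul_mem_rowStochastic (hM : IsMetzler M) (h1 : M *ᵥ 1 = 0) {s : ℝ} (hs : 0 ≤ s) :
    exp (s • M) ∈ rowStochastic ℝ n :=
  (hM.smul hs).exp_mem_rowStochastic (by rw [smul_mulVec, h1, smul_zero])

theorem exp_smul_mulVec_sub_le (hM : IsMetzler M) (h1 : M *ᵥ 1 = 0) {r : n} {ε : ℝ}
    (hε : ∀ i, ε ≤ exp M i r) {z : n → ℝ} {D : ℝ} (hD : ∀ i j, z i - z j ≤ D) (m : ℕ) {s : ℝ}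
    (hs : m ≤ s) (i j : n) :
    (exp (s • M) *ᵥ z) i - (exp (s • M) *ᵥ z) j ≤ (1 - ε) ^ m * D := by
  induction m generalizing s i j with
  | zero =>
    have hs : 0 ≤ s := by exact_mod_cast hs
    simpa using mulVec_sub_mulVec_le_of_mem_rowStochastic (hM.exp_smul_mem_rowStochastic h1 hs)
      (r := r) (fun i => nonneg_of_mem_rowStochastic (hM.exp_smul_mem_rowStochastic h1 hs)) hD i j
  | succ m ih =>
    have hstep : exp (s • M) = exp M * exp ((s - 1) • M) := by
      rw [← Matrix.exp_add_of_commute _ _ ((Commute.refl M).smul_right _)]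
      congr 1
      module
    rw [hstep, ← mulVec_mulVec, pow_succ', mul_assoc]
    exact mulVec_sub_mulVec_le_of_mem_rowStochastic (hM.exp_mem_rowStochastic h1) hε
      (ih (by push_cast at hs; linarith)) i j

theorem tendsto_exp_smul_mulVec_sub (hM : IsMetzler M) (h1 : M *ᵥ 1 = 0) {r : n}
    (hr : ∀ i, Relation.ReflTransGen (fun a b => 0 < M a b) i r) (z : n → ℝ) (i j : n) :
    Tendsto (fun s : ℝ => (exp (s • M) *ᵥ z) i - (exp (s • M) *ᵥ z) j) atTop (𝓝 0) := by
  have : Nonempty n := ⟨i⟩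
  obtain ⟨k, hk⟩ := Finite.exists_min (fun k => exp M k r)
  obtain ⟨p, hp⟩ := Finite.exists_max z
  obtain ⟨q, hq⟩ := Finite.exists_min z
  set ε := exp M k r
  have hε : 0 < ε := hM.exp_apply_pos (hr k)
  have hε1 : ε ≤ 1 := le_one_of_mem_rowStochastic (hM.exp_mem_rowStochastic h1)
  have hD (a b : n) : z a - z b ≤ z p - z q := by linarith [hp a, hq b]
  have hbound : ∀ᶠ s : ℝ in atTop,
      ‖(exp (s • M) *ᵥ z) i - (exp (s • M) *ᵥ z) j‖ ≤ (1 - ε) ^ ⌊s⌋₊ * (z p - z q) := by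
    filter_upwards [eventually_ge_atTop 0] with s hs
    have hfloor : (⌊s⌋₊ : ℝ) ≤ s := Nat.floor_le hs
    rw [Real.norm_eq_abs, abs_le]
    constructor
    · linarith [hM.exp_smul_mulVec_sub_le h1 hk hD ⌊s⌋₊ hfloor j i]
    · exact hM.exp_smul_mulVec_sub_le h1 hk hD ⌊s⌋₊ hfloor i j
  refine squeeze_zero_norm' hbound ?_
  simpa using ((tendsto_pow_atTop_nhds_zero_of_lt_one (by linarith) (by linarith)).comp
    tendsto_nat_floor_atTop).mul_const (z p - z q)

end IsMetzler

end Metzler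

open Set in
theorem eqOn_exp_smul_mulVec {n : Type*} [Fintype n] [DecidableEq n] {A : Matrix n n ℝ}
    {a S : ℝ → ℝ} {x : ℝ → n → ℝ} {t₀ t₁ : ℝ} (ha : ContinuousOn a (Icc t₀ t₁))
    (hS : ∀ t ∈ Icc t₀ t₁, HasDerivAt S (a t) t) (hx : ContinuousOn x (Icc t₀ t₁))
    (hx' : ∀ t ∈ Ico t₀ t₁, HasDerivWithinAt x (a t • (A *ᵥ x t)) (Ici t) t) :
    EqOn x (fun t => exp ((S t - S t₀) • A) *ᵥ x t₀) (Icc t₀ t₁) := by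
  obtain ⟨C, hC⟩ := isCompact_Icc.exists_bound_of_continuousOn ha
  have hlip (t : ℝ) (ht : t ∈ Ico t₀ t₁) :
      LipschitzOnWith (C.toNNReal * ‖A‖₊) (fun y => a t • (A *ᵥ y)) univ := by
    have hat := hC t (Ico_subset_Icc_self ht)
    refine (LipschitzWith.of_dist_le_mul fun y y' => ?_).lipschitzOnWith
    rw [dist_eq_norm, dist_eq_norm, ← smul_sub, ← mulVec_sub, norm_smul, NNReal.coe_mul,
      Real.coe_toNNReal _ ((norm_nonneg _).trans hat), coe_nnnorm, mul_assoc]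
    exact mul_le_mul hat (linfty_opNorm_mulVec _ _) (norm_nonneg _) ((norm_nonneg _).trans hat)
  have hflow (t : ℝ) (ht : t ∈ Icc t₀ t₁) :
      HasDerivAt (fun t => exp ((S t - S t₀) • A) *ᵥ x t₀)
        (a t • (A *ᵥ (exp ((S t - S t₀) • A) *ᵥ x t₀))) t :=
    hasDerivAt_exp_smul_mulVec A (x t₀) ((hS t ht).sub_const (S t₀))
  refine ODE_solution_unique_of_mem_Icc_right hlip hx hx' (fun _ _ => mem_univ _)
    (fun t ht => (hflow t ht).continuousAt.continuousWithinAt)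
    (fun t ht => (hflow t (Ico_subset_Icc_self ht)).hasDerivWithinAt)
    (fun _ _ => mem_univ _) ?_
  simp

section SignedLaplacian

variable {N : ℕ} {W : Matrix (Fin N) (Fin N) ℝ}

theorem sLap_mulVec_apply (W : Matrix (Fin N) (Fin N) ℝ) (x : Fin N → ℝ) (k : Fin N) :
    (sLap W *ᵥ x) k = ∑ l, (|W k l| * x k - W k l * x l) := by
  simp only [sLap, sub_mulVec, Pi.sub_apply, mulVec_diagonal, Finset.sum_sub_distrib,
    Finset.sum_mul]
  rfl

theorem sLap_mulVec_one_of_nonneg (hW : ∀ k l, 0 ≤ W k l) : sLap W *ᵥ 1 = 0 := by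
  ext k
  simp [sLap_mulVec_apply, abs_of_nonneg (hW _ _)]

theorem neg_sLap_apply_of_ne (W : Matrix (Fin N) (Fin N) ℝ) {k l : Fin N} (hkl : k ≠ l) :
    (-sLap W) k l = W k l := by
  simp [sLap, diagonal_apply_ne _ hkl]

theorem isMetzler_neg_sLap_of_nonneg (hW : ∀ k l, 0 ≤ W k l) : IsMetzler (-sLap W) :=
  fun k l hkl => (neg_sLap_apply_of_ne W hkl).symm ▸ hW k l

theorem Reaches.reflTransGen_neg_sLap_map_abs {i j : Fin N} (h : Reaches W i j) :
    Relation.ReflTransGen (fun a b => 0 < (-sLap (W.map abs)) a b) j i := by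
  induction h with
  | refl => exact .refl
  | @tail b c _ hbc ih =>
    rcases eq_or_ne c b with rfl | hcb
    · exact ih
    · refine .head ?_ ih
      rw [neg_sLap_apply_of_ne _ hcb, map_apply]
      exact abs_pos.2 hbc

end SignedLaplacian

namespace IsGauge

variable {N : ℕ} {W : Matrix (Fin N) (Fin N) ℝ} {g : Fin N → ℝ}

theorem mul_self_eq_one (hg : IsGauge W Set.univ g) (k : Fin N) : g k * g k = 1 := by
  rcases hg.1 k (Set.mem_univ k) with h | h <;> simp [h]

theorem mul_sLap_mulVec (hg : IsGauge W Set.univ g) (x : Fin N → ℝ) :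
    g * (sLap W *ᵥ x) = sLap (W.map abs) *ᵥ (g * x) := by
  ext k
  have hgW (l : Fin N) : g k * W k l = |W k l| * g l := by
    have h := hg.2 k (Set.mem_univ k) l (Set.mem_univ l)
    linear_combination g l * h - g k * W k l * hg.mul_self_eq_one l
  simp only [Pi.mul_apply, sLap_mulVec_apply, map_apply, abs_abs, Finset.mul_sum]
  refine Finset.sum_congr rfl fun l _ => ?_
  linear_combination -x l * hgW l

theorem sLap_mulVec_eq_zero (hg : IsGauge W Set.univ g) (c : ℝ) :
    sLap W *ᵥ (fun k => g k * c) = 0 := by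
  have hgg (y : Fin N → ℝ) : g * (g * y) = y := by
    ext k; simp [← mul_assoc, hg.mul_self_eq_one]
  rw [← hgg (sLap W *ᵥ _), hg.mul_sLap_mulVec]
  have : g * (fun k => g k * c) = c • 1 := by
    ext k; simp [← mul_assoc, hg.mul_self_eq_one]
  rw [this, mulVec_smul, sLap_mulVec_one_of_nonneg (W := W.map abs) (fun _ _ => abs_nonneg _),
    smul_zero, mul_zero]

end IsGauge

section Gain

variable {κ T t : ℝ}

theorem gain_of_lt (ht₀ : 0 ≤ t) (ht : t < T) : gain κ T t = κ / (T - t) := by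
  simp [gain, ht₀, ht]

theorem gain_of_le (ht : T ≤ t) : gain κ T t = 0 := by
  simp [gain, not_lt.2 ht]

/-- A primitive of `t ↦ ρ₁ + ρ₂ μ_T(t)` on `[0, T)`. -/
noncomputable def gainPrimitive (ρ1 ρ2 κ T t : ℝ) : ℝ := ρ1 * t - ρ2 * κ * Real.log (T - t)

theorem hasDerivAt_gainPrimitive (ρ1 ρ2 : ℝ) (ht : t < T) :
    HasDerivAt (gainPrimitive ρ1 ρ2 κ T) (ρ1 + ρ2 * (κ / (T - t))) t := by
  have hlog := ((hasDerivAt_id' t).const_sub T).log (sub_ne_zero.2 ht.ne')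
  refine (((hasDerivAt_id' t).const_mul ρ1).sub (hlog.const_mul (ρ2 * κ))).congr_deriv ?_
  ring

theorem tendsto_gainPrimitive (ρ1 : ℝ) {ρ2 : ℝ} (hρκ : 0 < ρ2 * κ) :
    Tendsto (gainPrimitive ρ1 ρ2 κ T) (𝓝[<] T) atTop := by
  have hsub : Tendsto (fun t => T - t) (𝓝[<] T) (𝓝[>] 0) := by
    refine tendsto_nhdsWithin_of_tendsto_nhds_of_eventually_within _ ?_ ?_
    · rw [← sub_self T]
      exact (tendsto_const_nhds.sub tendsto_id).mono_left nhdsWithin_le_nhds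
    · filter_upwards [self_mem_nhdsWithin] with t ht
      exact Set.mem_Ioi.2 (sub_pos.2 ht)
  have hlog := (Real.tendsto_log_nhdsGT_zero.comp hsub).const_mul_atBot hρκ
  have hlin : Tendsto (fun t => ρ1 * t) (𝓝[<] T) (𝓝 (ρ1 * T)) :=
    (tendsto_id.const_mul ρ1).mono_left nhdsWithin_le_nhds
  refine (hlin.add_atTop (tendsto_neg_atBot_atTop.comp hlog)).congr fun t => ?_
  simp [gainPrimitive, sub_eq_add_neg]

end Gain

namespace NominalTraj

variable {N : ℕ} {W : Matrix (Fin N) (Fin N) ℝ} {κ ρ1 ρ2 T1 : ℝ} {X : ℝ → Fin N → ℝ}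

theorem gauge_mul_eq_exp (hX : NominalTraj W κ ρ1 ρ2 T1 X) {g : Fin N → ℝ}
    (hg : IsGauge W Set.univ g) {t : ℝ} (ht₀ : 0 ≤ t) (ht : t < T1) :
    g * X t = exp ((gainPrimitive ρ1 ρ2 κ T1 t - gainPrimitive ρ1 ρ2 κ T1 0) •
      -sLap (W.map abs)) *ᵥ (g * X 0) := by
  refine eqOn_exp_smul_mulVec (a := fun u => ρ1 + ρ2 * (κ / (T1 - u))) ?_
    (fun u hu => hasDerivAt_gainPrimitive ρ1 ρ2 (hu.2.trans_lt ht))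
    (continuous_const.mul hX.1).continuousOn (fun u hu => ?_) ⟨ht₀, le_rfl⟩
  · exact continuousOn_const.add (continuousOn_const.mul (continuousOn_const.div
      (continuousOn_const.sub continuousOn_id) fun u hu => sub_ne_zero.2 (hu.2.trans_lt ht).ne'))
  · have hu' : u < T1 := hu.2.trans ht
    refine (((hX.2 u hu.1 hu'.ne).const_mul g).hasDerivWithinAt).congr_deriv ?_
    rw [gain_of_lt hu.1 hu', mul_smul_comm, hg.mul_sLap_mulVec, neg_mulVec, smul_neg, neg_smul]
    rfl

theorem exists_eq_gauge_mul (hX : NominalTraj W κ ρ1 ρ2 T1 X) (hQS : QuasiStronglyConnected W)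
    {g : Fin N → ℝ} (hg : IsGauge W Set.univ g) (hκ : 0 < κ) (hρ2 : 0 < ρ2) (hT1 : 0 < T1) :
    ∃ c, X T1 = fun k => g k * c := by
  obtain ⟨r, hr⟩ := hQS
  have hM : IsMetzler (-sLap (W.map abs)) := isMetzler_neg_sLap_of_nonneg fun _ _ => abs_nonneg _
  have h1 : (-sLap (W.map abs)) *ᵥ 1 = 0 := by
    rw [neg_mulVec, sLap_mulVec_one_of_nonneg (W := W.map abs) fun _ _ => abs_nonneg _, neg_zero]
  have hconsensus (i j : Fin N) : (g * X T1) i = (g * X T1) j := by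
    have hcont : Continuous fun t => (g * X t) i - (g * X t) j :=
      ((continuous_apply i).comp (continuous_const.mul hX.1)).sub
        ((continuous_apply j).comp (continuous_const.mul hX.1))
    have hflow := (hM.tendsto_exp_smul_mulVec_sub h1 (fun k => (hr k).reflTransGen_neg_sLap_map_abs)
      (g * X 0) i j).comp
      (tendsto_atTop_add_const_right _ (-gainPrimitive ρ1 ρ2 κ T1 0)
        (tendsto_gainPrimitive (T := T1) ρ1 (mul_pos hρ2 hκ)))
    refine sub_eq_zero.1 (tendsto_nhds_unique
      ((hcont.tendsto T1).mono_left (nhdsWithin_le_nhds (s := Set.Iio T1))) ?_)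
    refine hflow.congr' ?_
    filter_upwards [Ioo_mem_nhdsLT hT1] with t ht
    simp only [Function.comp_apply, ← sub_eq_add_neg, hX.gauge_mul_eq_exp hg ht.1.le ht.2]
  refine ⟨(g * X T1) r, funext fun k => ?_⟩
  calc X T1 k = g k * (g k * X T1 k) := by rw [← mul_assoc, hg.mul_self_eq_one, one_mul]
    _ = g k * (g * X T1) r := by rw [← hconsensus k r]; rfl

theorem hasDerivAt_of_lt (hX : NominalTraj W κ ρ1 ρ2 T1 X) (hT1 : 0 ≤ T1) {t : ℝ} (ht : T1 < t) :
    HasDerivAt X ((-ρ1) • (sLap W *ᵥ X t)) t := by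
  simpa [gain_of_le ht.le] using hX.2 t (hT1.trans ht.le) ht.ne'

/-- The right derivative at `T1` exists because the derivative has a limit there. -/
theorem hasDerivWithinAt_Ici (hX : NominalTraj W κ ρ1 ρ2 T1 X) (hT1 : 0 ≤ T1) :
    HasDerivWithinAt X ((-ρ1) • (sLap W *ᵥ X T1)) (Set.Ici T1) T1 := by
  have hrhs : Continuous fun t => (-ρ1) • (sLap W *ᵥ X t) :=
    (continuous_const.matrix_mulVec hX.1).const_smul (-ρ1)
  refine hasDerivWithinAt_Ici_of_tendsto_deriv
    (fun t ht => (hX.hasDerivAt_of_lt hT1 ht).differentiableAt.differentiableWithinAt)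
    hX.1.continuousWithinAt self_mem_nhdsWithin ?_
  refine ((hrhs.tendsto T1).mono_left nhdsWithin_le_nhds).congr' ?_
  filter_upwards [self_mem_nhdsWithin] with t ht
  exact (hX.hasDerivAt_of_lt hT1 ht).deriv.symm

theorem eq_of_le (hX : NominalTraj W κ ρ1 ρ2 T1 X) (hT1 : 0 ≤ T1) (hker : sLap W *ᵥ X T1 = 0)
    {t : ℝ} (ht : T1 ≤ t) : X t = X T1 := by
  have hflow := eqOn_exp_smul_mulVec (A := sLap W) (a := fun _ => -ρ1) (S := fun u => -ρ1 * u)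
    continuousOn_const (fun u _ => by simpa using (hasDerivAt_id' u).const_mul (-ρ1))
    hX.1.continuousOn (fun u hu => ?_) ⟨ht, le_rfl⟩
  · exact hflow.trans (exp_mulVec_of_mulVec_eq_zero (by rw [smul_mulVec, hker, smul_zero]))
  · rcases hu.1.eq_or_lt with rfl | hlt
    · exact hX.hasDerivWithinAt_Ici hT1
    · exact (hX.hasDerivAt_of_lt hT1 hlt).hasDerivWithinAt

end NominalTraj

theorem prescribed_time_bipartite_consensus_quasi_balanced_general
    {N : ℕ} (W : Matrix (Fin N) (Fin N) ℝ)
    (hQS : QuasiStronglyConnected W)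
    (g : Fin N → ℝ) (hg : IsGauge W Set.univ g)
    (κ ρ1 ρ2 T1 : ℝ) (hκ : 2 < κ) (hρ2 : 0 < ρ2) (hT1 : 0 < T1)
    (X : ℝ → Fin N → ℝ) (hX : NominalTraj W κ ρ1 ρ2 T1 X) :
    ∃ c : ℝ, ∀ t : ℝ, T1 ≤ t → ∀ k, X t k = g k * c := by
  obtain ⟨c, hc⟩ := hX.exists_eq_gauge_mul hQS hg (by linarith) hρ2 hT1
  have hker : sLap W *ᵥ X T1 = 0 := hc ▸ hg.sLap_mulVec_eq_zero c
  exact ⟨c, fun t ht k => by rw [hX.eq_of_le hT1.le hker ht, hc]⟩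

theorem prescribed_time_bipartite_consensus_quasi_balanced
    {N : ℕ} (hN : 2 ≤ N) (W : Matrix (Fin N) (Fin N) ℝ)
    (hdiag : ∀ k, W k k = 0)
    (hQS : QuasiStronglyConnected W)
    (g : Fin N → ℝ) (hg : IsGauge W Set.univ g)
    (κ ρ1 ρ2 T1 : ℝ) (hκ : 2 < κ) (hρ1 : 0 < ρ1) (hρ2 : 0 < ρ2) (hT1 : 0 < T1)
    (X : ℝ → Fin N → ℝ) (hX : NominalTraj W κ ρ1 ρ2 T1 X) :
    ∃ c : ℝ, ∀ t : ℝ, T1 ≤ t → ∀ k, X t k = g k * c :=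
  prescribed_time_bipartite_consensus_quasi_balanced_general W hQS g hg κ ρ1 ρ2 T1 hκ hρ2 hT1 X hX
end
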